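/- Semantic type equivalence implies strong type isomorphism: if σ ≅ τ then σ ≈ₛ τ. The converse fails: σ∨τ ≈ₛ τ∨σ is proved by the identity λx.x, but σ∨τ ≇ τ∨σ in general. -/

import Mathlib

namespace TypeIso

open Relation

/-- Untyped λ-terms with named variables. -/
inductive Term : Type
  | var : ℕ → Term
  | app : Term → Term → Term
  | lam : ℕ → Term → Term
deriving DecidableEq

namespace Term

/-- Free variables. -/
def fv : Term → Finset ℕ
  | var x => {x}
  | app M N => fv M ∪ fv N
  | lam x M => fv M \ {x}

/-- Substitution `M[N/x]` (naive; adequate for the linear terms considered). -/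
def subst : Term → ℕ → Term → Term
  | var y, x, N => if y = x then N else var y
  | app M₁ M₂, x, N => app (subst M₁ x N) (subst M₂ x N)
  | lam y M, x, N => if y = x then lam y M else lam y (subst M x N)

end Term

open Term

/-- One-step β-reduction. -/
inductive Beta : Term → Term → Prop
  | beta (x M N) : Beta (Term.app (Term.lam x M) N) (Term.subst M x N)
  | appL {M M'} (N) : Beta M M' → Beta (Term.app M N) (Term.app M' N)
  | appR (M) {N N'} : Beta N N' → Beta (Term.app M N) (Term.app M N')
  | lam (x) {M M'} : Beta M M' → Beta (Term.lam x M) (Term.lam x M')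

/-- One-step η-reduction. -/
inductive Eta : Term → Term → Prop
  | eta (x M) : x ∉ fv M → Eta (Term.lam x (Term.app M (Term.var x))) M
  | appL {M M'} (N) : Eta M M' → Eta (Term.app M N) (Term.app M' N)
  | appR (M) {N N'} : Eta N N' → Eta (Term.app M N) (Term.app M N')
  | lam (x) {M M'} : Eta M M' → Eta (Term.lam x M) (Term.lam x M')

def BetaStar : Term → Term → Prop := ReflTransGen Beta
def EtaStar : Term → Term → Prop := ReflTransGen Eta
/-- η-expansion: the converse of one-step η-reduction. -/
def EtaExp : Term → Term → Prop := fun a b => Eta b a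
def EtaExpStar : Term → Term → Prop := ReflTransGen EtaExp
def BetaConv : Term → Term → Prop := EqvGen Beta
def BetaEta : Term → Term → Prop := fun a b => Beta a b ∨ Eta a b
def BetaEtaConv : Term → Term → Prop := EqvGen BetaEta

def BetaEtaRed : Term → Term → Prop := ReflTransGen BetaEta

/-- `appList h [a₁,…,aₙ] = h a₁ … aₙ`. -/
def appList (h : Term) (args : List Term) : Term := args.foldl Term.app h
/-- `lamList [y₁,…,yₙ] M = λ y₁ … yₙ. M`. -/
def lamList (xs : List ℕ) (body : Term) : Term := xs.foldr Term.lam body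

/-- β-normal finite hereditary permutators:
`λ x y₁ … yₙ. x (P₁ y_{π(1)}) … (Pₙ y_{π(n)})` with each `Pᵢ` an FHP. -/
inductive FHPnf : Term → Prop
  | mk (x : ℕ) (ys : List ℕ) (Ps : List Term) (π : Equiv.Perm (Fin ys.length))
      (hlen : Ps.length = ys.length)
      (hx : x ∉ ys) (hnd : ys.Nodup)
      (hPs : ∀ P ∈ Ps, FHPnf P) :
      FHPnf (Term.lam x (lamList ys (appList (Term.var x)
        (List.ofFn fun i : Fin ys.length =>
          Term.app (Ps.get (Fin.cast hlen.symm i)) (Term.var (ys.get (π i)))))))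

/-- Finite hereditary permutators (modulo β-conversion). -/
def FHP (M : Term) : Prop := ∃ N, BetaConv M N ∧ FHPnf N

/-- β-normal finite hereditary identities:
`λ x y₁ … yₙ. x (Id₁ y₁) … (Idₙ yₙ)` with each `Idᵢ` an FHI. -/
inductive FHInf : Term → Prop
  | mk (x : ℕ) (ys : List ℕ) (Ids : List Term)
      (hlen : Ids.length = ys.length)
      (hx : x ∉ ys) (hnd : ys.Nodup)
      (hIds : ∀ P ∈ Ids, FHInf P) :
      FHInf (Term.lam x (lamList ys (appList (Term.var x)
        (List.ofFn fun i : Fin ys.length =>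
          Term.app (Ids.get (Fin.cast hlen.symm i)) (Term.var (ys.get i))))))

/-- Finite hereditary identities (modulo β-conversion). -/
def FHI (M : Term) : Prop := ∃ N, BetaConv M N ∧ FHInf N

/-- Types with atoms, ω, arrow, intersection and union. -/
inductive Ty : Type
  | atom : ℕ → Ty
  | omega : Ty
  | arr : Ty → Ty → Ty
  | and : Ty → Ty → Ty
  | or : Ty → Ty → Ty
deriving DecidableEq

/-- Semantic type equivalence `≅`: the least congruence with
`φ ≅ ω→φ`, `ω ≅ ω→ω`, `σ ≅ σ∧ω ≅ ω∧σ`, `ω ≅ σ∨ω ≅ ω∨σ`. -/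
inductive SemEq : Ty → Ty → Prop
  | refl (σ) : SemEq σ σ
  | symm : SemEq σ τ → SemEq τ σ
  | trans : SemEq σ τ → SemEq τ ρ → SemEq σ ρ
  | arr : SemEq σ σ' → SemEq τ τ' → SemEq (Ty.arr σ τ) (Ty.arr σ' τ')
  | and : SemEq σ σ' → SemEq τ τ' → SemEq (Ty.and σ τ) (Ty.and σ' τ')
  | or : SemEq σ σ' → SemEq τ τ' → SemEq (Ty.or σ τ) (Ty.or σ' τ')
  | atomFun (a) : SemEq (Ty.atom a) (Ty.arr Ty.omega (Ty.atom a))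
  | omegaFun : SemEq Ty.omega (Ty.arr Ty.omega Ty.omega)
  | andOmegaR (σ) : SemEq σ (Ty.and σ Ty.omega)
  | andOmegaL (σ) : SemEq σ (Ty.and Ty.omega σ)
  | orOmegaR (σ) : SemEq Ty.omega (Ty.or σ Ty.omega)
  | orOmegaL (σ) : SemEq Ty.omega (Ty.or Ty.omega σ)

/-- Relevant environments, considered up to permutation in the rules. -/
abbrev Env := List (ℕ × Ty)

def Env.dom (Γ : Env) : List ℕ := Γ.map Prod.fst

def EnvDisj (Γ₁ Γ₂ : Env) : Prop := ∀ x, x ∈ Γ₁.dom → x ∉ Γ₂.dom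

/-- The intersection-union type assignment system for linear λ-terms (Figure 1). -/
inductive Deriv : Env → Term → Ty → Prop
  | ax (x σ) : Deriv [(x, σ)] (Term.var x) σ
  | eqv {Γ M σ τ} : Deriv Γ M σ → SemEq σ τ → Deriv Γ M τ
  | perm {Γ Γ' M σ} : Deriv Γ M σ → Γ.Perm Γ' → Deriv Γ' M σ
  | arrI {Γ x σ M τ} : Deriv ((x, σ) :: Γ) M τ → Deriv Γ (Term.lam x M) (Ty.arr σ τ)
  | arrE {Γ₁ Γ₂ M N σ τ} : Deriv Γ₁ M (Ty.arr σ τ) → Deriv Γ₂ N σ → EnvDisj Γ₁ Γ₂ →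
      Deriv (Γ₁ ++ Γ₂) (Term.app M N) τ
  | andI {Γ M σ τ} : Deriv Γ M σ → Deriv Γ M τ → Deriv Γ M (Ty.and σ τ)
  | andE₁ {Γ M σ τ} : Deriv Γ M (Ty.and σ τ) → Deriv Γ M σ
  | andE₂ {Γ M σ τ} : Deriv Γ M (Ty.and σ τ) → Deriv Γ M τ
  | orI₁ {Γ M σ τ} : Deriv Γ M σ → Deriv Γ M (Ty.or σ τ)
  | orI₂ {Γ M σ τ} : Deriv Γ M σ → Deriv Γ M (Ty.or τ σ)
  | orE {Γ₁ Γ₂ x M N σ τ ζ ρ} :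
      Deriv ((x, Ty.and σ ζ) :: Γ₁) M ρ →
      Deriv ((x, Ty.and τ ζ) :: Γ₁) M ρ →
      Deriv Γ₂ N (Ty.and (Ty.or σ τ) ζ) → EnvDisj Γ₁ Γ₂ →
      Deriv (Γ₁ ++ Γ₂) (Term.subst M x N) ρ

/-- Linear λ-terms: every free or bound variable occurs exactly once. -/
inductive Linear : Term → Prop
  | var (x) : Linear (Term.var x)
  | app {M N} : Linear M → Linear N → Disjoint (fv M) (fv N) → Linear (Term.app M N)
  | lam {x M} : Linear M → x ∈ fv M → Linear (Term.lam x M)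

/-- A variable fresh for a finite set. -/
def freshVar (s : Finset ℕ) : ℕ := (s.sup id) + 1

/-- Composition `λx. P (Q x)` with a fresh `x`. -/
def tcomp (P Q : Term) : Term :=
  Term.lam (freshVar (fv P ∪ fv Q))
    (Term.app P (Term.app Q (Term.var (freshVar (fv P ∪ fv Q)))))

/-- `P` and `Q` are inverse of each other: both compositions are βη-equal to the identity. -/
def InvPair (P Q : Term) : Prop :=
  ∃ x, BetaEtaConv (tcomp P Q) (Term.lam x (Term.var x)) ∧
       BetaEtaConv (tcomp Q P) (Term.lam x (Term.var x))

/-- Type isomorphism `σ ≈ τ`. -/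
def TyIso (σ τ : Ty) : Prop :=
  ∃ P Q, FHP P ∧ FHP Q ∧ InvPair P Q ∧
    Deriv [] P (Ty.arr σ τ) ∧ Deriv [] Q (Ty.arr τ σ)

/-- Strong type isomorphism `σ ≈ₛ τ`: proved by a finite hereditary identity. -/
def StrongIso (σ τ : Ty) : Prop :=
  ∃ Id, FHI Id ∧ Deriv [] Id (Ty.arr σ τ) ∧ Deriv [] Id (Ty.arr τ σ)

/-- The normalisation pre-order `≤` on types. -/
inductive NormLe : Ty → Ty → Prop
  | refl (σ) : NormLe σ σ
  | trans {σ τ ρ} : NormLe σ τ → NormLe τ ρ → NormLe σ ρ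
  | leOmega (σ) : NormLe σ Ty.omega
  | andE₁ (σ τ) : NormLe (Ty.and σ τ) σ
  | andE₂ (σ τ) : NormLe (Ty.and σ τ) τ
  | orI₁ (σ τ) : NormLe σ (Ty.or σ τ)
  | orI₂ (σ τ) : NormLe τ (Ty.or σ τ)
  | andI {σ τ ρ} : NormLe σ τ → NormLe σ ρ → NormLe σ (Ty.and τ ρ)
  | orE {σ τ ρ} : NormLe σ τ → NormLe ρ τ → NormLe (Ty.or σ ρ) τ
  | atomArr (a σ) : NormLe (Ty.atom a) (Ty.arr σ (Ty.atom a))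
  | omegaArr (σ) : NormLe Ty.omega (Ty.arr σ Ty.omega)
  | arr {σ σ' τ τ'} : NormLe σ' σ → NormLe τ τ' → NormLe (Ty.arr σ τ) (Ty.arr σ' τ')

/-- Inner type normalisation rules `σ ⇝ τ`. -/
inductive InnerStep : Ty → Ty → Prop
  | atomRule (a) : InnerStep (Ty.arr Ty.omega (Ty.atom a)) (Ty.atom a)
  | omegaRule {σ} : NormLe Ty.omega σ → σ ≠ Ty.omega → InnerStep σ Ty.omega
  | distArrAnd (σ τ ρ) :
      InnerStep (Ty.arr σ (Ty.and τ ρ)) (Ty.and (Ty.arr σ τ) (Ty.arr σ ρ))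
  | distAndArr (σ τ ρ ζ) :
      InnerStep (Ty.arr (Ty.and (Ty.or σ τ) ρ) ζ)
                (Ty.arr (Ty.or (Ty.and σ ρ) (Ty.and τ ρ)) ζ)
  | distOrArr (σ τ ρ) :
      InnerStep (Ty.arr (Ty.or σ τ) ρ) (Ty.and (Ty.arr σ ρ) (Ty.arr τ ρ))
  | distArrOr (σ τ ρ ζ) :
      InnerStep (Ty.arr σ (Ty.or (Ty.and τ ρ) ζ))
                (Ty.arr σ (Ty.and (Ty.or τ ζ) (Ty.or ρ ζ)))
  | eraseAnd {σ τ} : NormLe σ τ → InnerStep (Ty.and σ τ) σ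
  | eraseOr {σ τ} : NormLe σ τ → InnerStep (Ty.or σ τ) τ

/-- Type contexts. -/
inductive TyCtx : Type
  | hole : TyCtx
  | arrL : TyCtx → Ty → TyCtx
  | arrR : Ty → TyCtx → TyCtx
  | andL : TyCtx → Ty → TyCtx
  | andR : Ty → TyCtx → TyCtx
  | orL : TyCtx → Ty → TyCtx
  | orR : Ty → TyCtx → TyCtx

/-- Filling the hole of a type context. -/
def TyCtx.fill : TyCtx → Ty → Ty
  | TyCtx.hole, τ => τ
  | TyCtx.arrL C σ, τ => Ty.arr (C.fill τ) σ
  | TyCtx.arrR σ C, τ => Ty.arr σ (C.fill τ)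
  | TyCtx.andL C σ, τ => Ty.and (C.fill τ) σ
  | TyCtx.andR σ C, τ => Ty.and σ (C.fill τ)
  | TyCtx.orL C σ, τ => Ty.or (C.fill τ) σ
  | TyCtx.orR σ C, τ => Ty.or σ (C.fill τ)

/-- Top normalisation rules `σ ⟹ τ`: contextual closure of the inner rules,
plus `(σ∧τ)∨ρ ⟹ (σ∨ρ)∧(τ∨ρ)` at the top or in right-hand sides of arrows. -/
inductive TopStep : Ty → Ty → Prop
  | ctx {σ τ} (C : TyCtx) : InnerStep σ τ → TopStep (C.fill σ) (C.fill τ)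
  | dist (σ τ ρ) :
      TopStep (Ty.or (Ty.and σ τ) ρ) (Ty.and (Ty.or σ ρ) (Ty.or τ ρ))
  | arrR {τ τ'} (σ) : TopStep τ τ' → TopStep (Ty.arr σ τ) (Ty.arr σ τ')

open Classical in
/-- The normal form of a type w.r.t. the top normalisation rules. -/
noncomputable def nf (σ : Ty) : Ty :=
  if h : ∃ ν, Relation.ReflTransGen TopStep σ ν ∧ ∀ ρ, ¬ TopStep ν ρ then h.choose else σ

/-- `mkArrow [ξ₁,…,ξₙ] μ = ξ₁ → … → ξₙ → μ`. -/
def mkArrow (args : List Ty) (res : Ty) : Ty := args.foldr Ty.arr res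

/-- Similarity between sequences of normal types. -/
inductive TySim : List Ty → List Ty → Prop
  | refl (l) : TySim l l
  | symm {l r} : TySim l r → TySim r l
  | trans {l r s} : TySim l r → TySim r s → TySim l s
  | mergeAnd (l₁ l₂ r₁ r₂ : List Ty) (η₁ η₂ θ₁ θ₂ : Ty) :
      l₁.length = r₁.length →
      TySim (l₁ ++ η₁ :: η₂ :: l₂) (r₁ ++ θ₁ :: θ₂ :: r₂) →
      TySim (l₁ ++ nf (Ty.and η₁ η₂) :: l₂) (r₁ ++ nf (Ty.and θ₁ θ₂) :: r₂)
  | mergeOr (l₁ l₂ r₁ r₂ : List Ty) (η₁ η₂ θ₁ θ₂ : Ty) :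
      l₁.length = r₁.length →
      TySim (l₁ ++ η₁ :: η₂ :: l₂) (r₁ ++ θ₁ :: θ₂ :: r₂) →
      TySim (l₁ ++ nf (Ty.or η₁ η₂) :: l₂) (r₁ ++ nf (Ty.or θ₁ θ₂) :: r₂)
  | arrow (m n : ℕ) (ξ χ : Fin n → Fin m → Ty) (μ ν : Fin m → Ty)
      (π : Equiv.Perm (Fin n)) :
      (∀ i, TySim (List.ofFn (ξ i)) (List.ofFn (χ i))) →
      TySim (List.ofFn μ) (List.ofFn ν) →
      TySim (List.ofFn fun j => nf (mkArrow (List.ofFn fun i => ξ i j) (μ j)))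
            (List.ofFn fun j => nf (mkArrow (List.ofFn fun i => χ (π i) j) (ν j)))

/-! Every semantic equivalence `σ ≅ τ` is witnessed by the identity `λx.x`, typed with the
equivalence rule; the same term proves `σ∨τ ≈ₛ τ∨σ` by ∨-elimination on its variable.
Conversely, orienting the defining equations of `≅` gives a normalisation `omegaNorm` that
removes redundant `ω`s; it is invariant under `≅` and keeps `a∨b` and `b∨a` apart. -/

def idTerm : Term := Term.lam 0 (Term.var 0)

lemma fhInf_idTerm : FHInf idTerm := by
  simpa [idTerm, lamList, appList] using
    FHInf.mk 0 [] [] rfl List.not_mem_nil List.nodup_nil (by simp)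

lemma fhi_idTerm : FHI idTerm := ⟨idTerm, EqvGen.refl _, fhInf_idTerm⟩

lemma strongIso_of_deriv_var {σ τ : Ty} (hστ : Deriv [(0, σ)] (Term.var 0) τ)
    (hτσ : Deriv [(0, τ)] (Term.var 0) σ) : StrongIso σ τ :=
  ⟨idTerm, fhi_idTerm, Deriv.arrI hστ, Deriv.arrI hτσ⟩

lemma deriv_var_of_semEq (x : ℕ) {σ τ : Ty} (h : SemEq σ τ) :
    Deriv [(x, σ)] (Term.var x) τ :=
  Deriv.eqv (Deriv.ax x σ) h

/-- ∨-elimination with the trivial side type `ζ = ω`, using `σ ≅ σ∧ω`. -/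
lemma deriv_var_or_comm (x : ℕ) (σ τ : Ty) :
    Deriv [(x, Ty.or σ τ)] (Term.var x) (Ty.or τ σ) := by
  have hσ : Deriv [(x, Ty.and σ Ty.omega)] (Term.var x) (Ty.or τ σ) :=
    Deriv.orI₂ (deriv_var_of_semEq x (SemEq.andOmegaR σ).symm)
  have hτ : Deriv [(x, Ty.and τ Ty.omega)] (Term.var x) (Ty.or τ σ) :=
    Deriv.orI₁ (deriv_var_of_semEq x (SemEq.andOmegaR τ).symm)
  have hστω : Deriv [(x, Ty.or σ τ)] (Term.var x) (Ty.and (Ty.or σ τ) Ty.omega) :=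
    deriv_var_of_semEq x (SemEq.andOmegaR _)
  have hdisj : EnvDisj [] [(x, Ty.or σ τ)] := by simp [EnvDisj, Env.dom]
  simpa [Term.subst] using Deriv.orE hσ hτ hστω hdisj

lemma SemEq.strongIso {σ τ : Ty} (h : SemEq σ τ) : StrongIso σ τ :=
  strongIso_of_deriv_var (deriv_var_of_semEq 0 h) (deriv_var_of_semEq 0 h.symm)

lemma strongIso_or_comm (σ τ : Ty) : StrongIso (Ty.or σ τ) (Ty.or τ σ) :=
  strongIso_of_deriv_var (deriv_var_or_comm 0 σ τ) (deriv_var_or_comm 0 τ σ)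

def Ty.isAtomOrOmega : Ty → Bool
  | Ty.atom _ => true
  | Ty.omega => true
  | _ => false

def omegaNorm : Ty → Ty
  | Ty.atom a => Ty.atom a
  | Ty.omega => Ty.omega
  | Ty.arr σ τ =>
      if omegaNorm σ = Ty.omega ∧ (omegaNorm τ).isAtomOrOmega then omegaNorm τ
      else Ty.arr (omegaNorm σ) (omegaNorm τ)
  | Ty.and σ τ =>
      if omegaNorm σ = Ty.omega then omegaNorm τ
      else if omegaNorm τ = Ty.omega then omegaNorm σ
      else Ty.and (omegaNorm σ) (omegaNorm τ)
  | Ty.or σ τ =>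
      if omegaNorm σ = Ty.omega ∨ omegaNorm τ = Ty.omega then Ty.omega
      else Ty.or (omegaNorm σ) (omegaNorm τ)

lemma SemEq.omegaNorm_eq {σ τ : Ty} (h : SemEq σ τ) : omegaNorm σ = omegaNorm τ := by
  induction h with
  | refl => rfl
  | symm _ ih => exact ih.symm
  | trans _ _ ih₁ ih₂ => exact ih₁.trans ih₂
  | arr _ _ ih₁ ih₂ | and _ _ ih₁ ih₂ | or _ _ ih₁ ih₂ => simp only [omegaNorm, ih₁, ih₂]
  | atomFun | omegaFun => simp [omegaNorm, Ty.isAtomOrOmega]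
  | andOmegaR | andOmegaL | orOmegaR | orOmegaL => simp [omegaNorm]

lemma not_semEq_or_comm_of_ne {a b : ℕ} (hab : a ≠ b) :
    ¬ SemEq (Ty.or (Ty.atom a) (Ty.atom b)) (Ty.or (Ty.atom b) (Ty.atom a)) := fun h => by
  simpa [omegaNorm, hab] using h.omegaNorm_eq

/-- Semantic equivalence implies strong isomorphism, and the converse fails:
`σ∨τ ≈ₛ τ∨σ` always holds, but `σ∨τ ≅ τ∨σ` fails in general. -/
theorem semEq_implies_strongIso_not_conversely :
    (∀ σ τ : Ty, SemEq σ τ → StrongIso σ τ) ∧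
    (∀ σ τ : Ty, StrongIso (Ty.or σ τ) (Ty.or τ σ)) ∧
    (∃ σ τ : Ty, ¬ SemEq (Ty.or σ τ) (Ty.or τ σ)) :=
  ⟨fun _ _ h => h.strongIso, strongIso_or_comm,
    ⟨Ty.atom 0, Ty.atom 1, not_semEq_or_comm_of_ne zero_ne_one⟩⟩

end TypeIso
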